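/- arXiv:2107.00461 — 2 statements merged into one kernel-verified Lean document; each statement's English description precedes it below -/
import Mathlib

section
/- Let x ∈ (0,1) be irrational and suppose the derivative ?'(x) of the Minkowski question-mark function exists at x and equals 0. Write φ_x(t) = S_x(t) − κ₁·t. Then there exists T such that for all integers t > s > T one has max_{1 ≤ u ≤ t} φ_x(u) ≥ |φ_x(t) − φ_x(s)|. -/
open Filter Topology

/-- Head-recursion continuant helper. -/
def contAux : List ℕ → ℕ
  | [] => 1
  | [a] => a
  | a :: b :: l => a * contAux (b :: l) + contAux l

/-- The continuant `⟨a_1,…,a_t⟩`, satisfying `⟨⟩ = 1`, `⟨a⟩ = a` and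
`⟨a_1,…,a_t⟩ = a_t⟨a_1,…,a_{t-1}⟩ + ⟨a_1,…,a_{t-2}⟩`. -/
def cont (l : List ℕ) : ℕ := contAux l.reverse

/-- `S_x(t) = a_1 + ⋯ + a_t` where `a i` denotes `a_{i+1}`. -/
def cfSum (a : ℕ → ℕ) (t : ℕ) : ℕ := ∑ i ∈ Finset.range t, a i

/-- `x = [0;a_1,a_2,…]`: all partial quotients are positive and the convergents
`⟨a_2,…,a_t⟩ / ⟨a_1,…,a_t⟩` tend to `x`. -/
def IsCFOf (x : ℝ) (a : ℕ → ℕ) : Prop :=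
  (∀ i, 0 < a i) ∧
  Filter.Tendsto
    (fun t => ((cont (((List.range t).map a).tail) : ℝ) / (cont ((List.range t).map a) : ℝ)))
    Filter.atTop (nhds x)

noncomputable def Phi : ℝ := (1 + Real.sqrt 5) / 2
noncomputable def kappa1 : ℝ := 2 * Real.log Phi / Real.log 2
noncomputable def kappa4 : ℝ := Real.sqrt ((kappa1 - 1) / Real.log 2)

/-- `Q` is the Minkowski question-mark function: continuous and strictly increasing on `[0,1]`,
`Q 0 = 0`, `Q 1 = 1`, and given on irrationals by the Denjoy–Salem series. -/
def IsMinkowski (Q : ℝ → ℝ) : Prop :=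
  ContinuousOn Q (Set.Icc 0 1) ∧ StrictMonoOn Q (Set.Icc 0 1) ∧
  Q 0 = 0 ∧ Q 1 = 1 ∧
  ∀ x ∈ Set.Ioo (0:ℝ) 1, Irrational x → ∀ a : ℕ → ℕ, IsCFOf x a →
    Q x = ∑' k : ℕ, (-1 : ℝ) ^ k * (2 : ℝ) ^ ((1 : ℤ) - (cfSum a (k+1) : ℤ))

/-!
Write `x = [0; a 0, a 1, …]` (so `a i` is the paper's `a_{i+1}`), let `qₜ` be the convergent
denominators and `zₜ` the number obtained from `x` by increasing `a t` by one. Both `x` and `zₜ`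
lie within `1/qₜ²` of the common convergent `pₜ/qₜ`, so `|zₜ - x| ≤ 2/qₜ²`. Their Denjoy–Salem
series agree before index `t` and differ by half of an alternating tail from there on, which gives
`|?(zₜ) - ?(x)| ≥ 2^(-S(t+1)-1)`. As `?'(x) = 0`, eventually `Φ⁴ qₜ² ≤ 2^S(t+1)`, and the Fibonacci
growth `Φᵗ ≤ Φ qₜ` turns this into `κ₁ (t+1) ≤ S(t+1)`, i.e. `φ_x ≥ 0` from some point on.
Once `φ_x(s), φ_x(t) ≥ 0`, the larger of them bounds `|φ_x(t) - φ_x(s)|`.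
-/

open Finset Real

lemma List.reverse_map_range_succ {α : Type*} (f : ℕ → α) (n : ℕ) :
    ((List.range (n + 1)).map f).reverse = f n :: ((List.range n).map f).reverse := by
  simp [List.range_succ]

lemma div_eq_div_of_abs_sub_lt {m n : ℤ} {D q : ℕ} (hD : 0 < D) (hq : 0 < q)
    (h : |(m : ℝ) / D - n / q| < ((D : ℝ) * q)⁻¹) : (m : ℝ) / D = n / q := by
  have hDq : (0 : ℝ) < D * q := by positivity
  rw [div_sub_div _ _ (by positivity) (by positivity), abs_div, abs_of_pos hDq,
    div_lt_iff₀ hDq, inv_mul_cancel₀ hDq.ne'] at h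
  have hint : |m * (q : ℤ) - D * n| < 1 := by exact_mod_cast h
  have hzero : (m : ℝ) * q - D * n = 0 := by exact_mod_cast Int.abs_lt_one_iff.mp hint
  rw [div_eq_div_iff (by positivity) (by positivity)]
  linarith

lemma half_le_tsum_alternating {e : ℕ → ℝ} (he : Antitone e) (hs : Summable e)
    (h1 : e 1 ≤ e 0 / 2) : e 0 / 2 ≤ ∑' j, (-1) ^ j * e j := by
  have h := he.alternating_series_le_tendsto hs.tendsto_alternating_series_tsum 1
  norm_num [sum_range_succ] at h
  linarith

lemma kappa1_mul_le_of_goldenRatio_pow_le {u m : ℕ} (h : goldenRatio ^ (2 * u) ≤ 2 ^ m) :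
    kappa1 * u ≤ m := by
  have hlog := log_le_log (by positivity) h
  rw [log_pow, log_pow] at hlog
  push_cast at hlog
  rw [kappa1, div_mul_eq_mul_div, div_le_iff₀ (log_pos one_lt_two)]
  change 2 * log goldenRatio * u ≤ m * log 2
  linarith

lemma exists_abs_sub_le_of_eventually_nonneg {φ : ℕ → ℝ} (h : ∀ᶠ u in atTop, 0 ≤ φ u) :
    ∃ T : ℕ, ∀ t s : ℕ, T < s → s < t → ∃ u, 1 ≤ u ∧ u ≤ t ∧ φ u ≥ |φ t - φ s| := by
  obtain ⟨T, hT⟩ := eventually_atTop.mp h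
  refine ⟨T, fun t s hs hst => ?_⟩
  have hφs := hT s hs.le
  have hφt := hT t (hs.trans hst).le
  rcases le_total (φ s) (φ t) with hle | hle
  · exact ⟨t, by omega, le_rfl, by rw [abs_of_nonneg (sub_nonneg.2 hle)]; linarith⟩
  · exact ⟨s, by omega, hst.le, by rw [abs_of_nonpos (sub_nonpos.2 hle)]; linarith⟩

def cfDen (a : ℕ → ℕ) : ℕ → ℕ
  | 0 => 1
  | 1 => a 0
  | n + 2 => a (n + 1) * cfDen a (n + 1) + cfDen a n

def cfNum (a : ℕ → ℕ) : ℕ → ℕ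
  | 0 => 0
  | 1 => 1
  | n + 2 => a (n + 1) * cfNum a (n + 1) + cfNum a n

noncomputable def cfGap (a : ℕ → ℕ) (n : ℕ) : ℝ := ((cfDen a n : ℝ) * cfDen a (n + 1))⁻¹

noncomputable def cfConv (a : ℕ → ℕ) (n : ℕ) : ℝ := cfNum a n / cfDen a n

/-- The value of `[0; a 0, a 1, …]`, summed as the increments `cfConv a (n + 1) - cfConv a n`. -/
noncomputable def cfValue (a : ℕ → ℕ) : ℝ := ∑' n, (-1) ^ n * cfGap a n

def cfBump (a : ℕ → ℕ) (t : ℕ) : ℕ → ℕ := Function.update a t (a t + 1)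

noncomputable def qmWeight (a : ℕ → ℕ) (k : ℕ) : ℝ := 2 / 2 ^ cfSum a (k + 1)

lemma cont_map_range (a : ℕ → ℕ) (n : ℕ) : cont ((List.range n).map a) = cfDen a n := by
  induction n using Nat.strong_induction_on with
  | _ n ih =>
    match n with
    | 0 => rfl
    | 1 => simp [cont, contAux, cfDen]
    | n + 2 =>
      simp only [cont] at ih ⊢
      rw [List.reverse_map_range_succ, List.reverse_map_range_succ, contAux,
        ← List.reverse_map_range_succ, ih (n + 1) (by omega), ih n (by omega), cfDen]

lemma cfNum_succ (a : ℕ → ℕ) (n : ℕ) : cfNum a (n + 1) = cfDen (fun i => a (i + 1)) n := by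
  induction n using Nat.strong_induction_on with
  | _ n ih =>
    match n with
    | 0 => rfl
    | 1 => simp [cfNum, cfDen]
    | n + 2 => rw [cfNum, ih (n + 1) (by omega), ih n (by omega), cfDen]

lemma cont_tail_map_range_succ (a : ℕ → ℕ) (n : ℕ) :
    cont ((List.range (n + 1)).map a).tail = cfNum a (n + 1) := by
  rw [List.range_succ_eq_map, List.map_cons, List.tail_cons, List.map_map, cfNum_succ,
    ← cont_map_range]
  rfl

lemma cfDen_congr {a b : ℕ → ℕ} {n : ℕ} (h : ∀ i < n, a i = b i) : cfDen a n = cfDen b n := by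
  induction n using Nat.strong_induction_on with
  | _ n ih =>
    match n with
    | 0 => rfl
    | 1 => exact h 0 one_pos
    | n + 2 =>
      rw [cfDen, cfDen, h (n + 1) (by omega), ih (n + 1) (by omega) (fun i hi => h i (by omega)),
        ih n (by omega) (fun i hi => h i (by omega))]

lemma cfNum_congr {a b : ℕ → ℕ} {n : ℕ} (h : ∀ i < n, a i = b i) : cfNum a n = cfNum b n := by
  induction n using Nat.strong_induction_on with
  | _ n ih =>
    match n with
    | 0 => rfl
    | 1 => rfl
    | n + 2 =>
      rw [cfNum, cfNum, h (n + 1) (by omega), ih (n + 1) (by omega) (fun i hi => h i (by omega)),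
        ih n (by omega) (fun i hi => h i (by omega))]

lemma cfNum_mul_cfDen_sub (a : ℕ → ℕ) (n : ℕ) :
    (cfNum a (n + 1) : ℤ) * cfDen a n - cfNum a n * cfDen a (n + 1) = (-1) ^ n := by
  induction n with
  | zero => simp [cfNum, cfDen]
  | succ n ih =>
    simp only [cfNum, cfDen, Nat.cast_add, Nat.cast_mul, pow_succ] at ih ⊢
    linear_combination -ih

lemma cfSum_succ (a : ℕ → ℕ) (n : ℕ) : cfSum a (n + 1) = cfSum a n + a n :=
  sum_range_succ a n

lemma cfBump_apply (a : ℕ → ℕ) (t i : ℕ) : cfBump a t i = a i + if i = t then 1 else 0 := by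
  by_cases h : i = t <;> simp [cfBump, h]

lemma cfSum_cfBump (a : ℕ → ℕ) (t m : ℕ) :
    cfSum (cfBump a t) m = cfSum a m + if t < m then 1 else 0 := by
  simp only [cfSum, cfBump_apply, sum_add_distrib, sum_ite_eq', mem_range]

lemma qmWeight_pos (a : ℕ → ℕ) (k : ℕ) : 0 < qmWeight a k := by
  unfold qmWeight; positivity

lemma qmWeight_cfBump (a : ℕ → ℕ) (t k : ℕ) :
    qmWeight (cfBump a t) k = if t ≤ k then qmWeight a k / 2 else qmWeight a k := by
  split_ifs with h
  · rw [qmWeight, qmWeight, cfSum_cfBump, if_pos (Nat.lt_succ_of_le h), pow_succ]; ring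
  · rw [qmWeight, qmWeight, cfSum_cfBump, if_neg (by omega), add_zero]

section PositivePartialQuotients

variable {a : ℕ → ℕ} (ha : ∀ i, 0 < a i)
include ha

lemma cfDen_pos (n : ℕ) : 0 < cfDen a n := by
  induction n using Nat.strong_induction_on with
  | _ n ih =>
    match n with
    | 0 => exact one_pos
    | 1 => exact ha 0
    | n + 2 =>
      have := ih n (by omega)
      rw [cfDen]
      positivity

lemma cfDen_add_le (n : ℕ) : cfDen a n + cfDen a (n + 1) ≤ cfDen a (n + 2) := by
  rw [cfDen]
  nlinarith [ha (n + 1), cfDen_pos ha (n + 1)]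

lemma cfDen_le_succ (n : ℕ) : cfDen a n ≤ cfDen a (n + 1) := by
  cases n with
  | zero => exact ha 0
  | succ n => exact le_of_add_le_right (cfDen_add_le ha n)

lemma le_cfDen (n : ℕ) : n ≤ cfDen a n := by
  induction n using Nat.strong_induction_on with
  | _ n ih =>
    match n with
    | 0 => exact Nat.zero_le _
    | 1 => exact ha 0
    | n + 2 =>
      have := cfDen_add_le ha n
      have := ih (n + 1) (by omega)
      have := cfDen_pos ha n
      omega

lemma goldenRatio_pow_le_mul_cfDen (n : ℕ) : goldenRatio ^ n ≤ goldenRatio * cfDen a n := by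
  induction n using Nat.strong_induction_on with
  | _ n ih =>
    have hφ := one_lt_goldenRatio
    match n with
    | 0 => simp [cfDen, hφ.le]
    | 1 =>
      have : (1 : ℝ) ≤ cfDen a 1 := by exact_mod_cast cfDen_pos ha 1
      simpa using mul_le_mul_of_nonneg_left this (by linarith)
    | n + 2 =>
      have hadd : (cfDen a n : ℝ) + cfDen a (n + 1) ≤ cfDen a (n + 2) := by
        exact_mod_cast cfDen_add_le ha n
      calc goldenRatio ^ (n + 2) = goldenRatio ^ n + goldenRatio ^ (n + 1) := by
            rw [pow_add, goldenRatio_sq]; ring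
        _ ≤ goldenRatio * (cfDen a n + cfDen a (n + 1)) := by
            linarith [ih n (by omega), ih (n + 1) (by omega)]
        _ ≤ goldenRatio * cfDen a (n + 2) := by gcongr

lemma cfGap_pos (n : ℕ) : 0 < cfGap a n := by
  have := cfDen_pos ha n
  have := cfDen_pos ha (n + 1)
  unfold cfGap
  positivity

lemma antitone_cfGap : Antitone (cfGap a) := by
  refine antitone_nat_of_succ_le fun n => ?_
  have := cfDen_pos ha n
  have := cfDen_pos ha (n + 1)
  have : (cfDen a n : ℝ) ≤ cfDen a (n + 2) := by
    exact_mod_cast (cfDen_le_succ ha n).trans (cfDen_le_succ ha (n + 1))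
  unfold cfGap
  gcongr ?_⁻¹
  rw [mul_comm]
  gcongr

lemma cfGap_succ_le_half (n : ℕ) : cfGap a (n + 1) ≤ 2⁻¹ * cfGap a n := by
  have := cfDen_pos ha n
  have := cfDen_pos ha (n + 1)
  have : 2 * (cfDen a n : ℝ) ≤ cfDen a (n + 2) := by
    have := cfDen_add_le ha n
    have := cfDen_le_succ ha n
    exact_mod_cast (by omega : 2 * cfDen a n ≤ cfDen a (n + 2))
  unfold cfGap
  rw [← mul_inv]
  gcongr ?_⁻¹
  nlinarith

lemma summable_cfGap : Summable (cfGap a) :=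
  summable_of_ratio_norm_eventually_le (by norm_num : (2⁻¹ : ℝ) < 1) <|
    Eventually.of_forall fun n => by
      simpa [abs_of_pos (cfGap_pos ha _)] using cfGap_succ_le_half ha n

lemma cfGap_le_inv_sq (n : ℕ) : cfGap a n ≤ ((cfDen a n : ℝ) ^ 2)⁻¹ := by
  have := cfDen_pos ha n
  have : (cfDen a n : ℝ) ≤ cfDen a (n + 1) := by exact_mod_cast cfDen_le_succ ha n
  unfold cfGap
  gcongr ?_⁻¹
  nlinarith

lemma cfConv_succ_sub (n : ℕ) : cfConv a (n + 1) - cfConv a n = (-1) ^ n * cfGap a n := by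
  have h0 := (cfDen_pos ha n).ne'
  have h1 := (cfDen_pos ha (n + 1)).ne'
  have hdet : (cfNum a (n + 1) : ℝ) * cfDen a n - cfNum a n * cfDen a (n + 1) = (-1) ^ n := by
    exact_mod_cast cfNum_mul_cfDen_sub a n
  rw [cfConv, cfConv, cfGap, div_sub_div _ _ (by exact_mod_cast h1) (by exact_mod_cast h0),
    ← hdet]
  ring

lemma cfConv_eq_sum (n : ℕ) : cfConv a n = ∑ i ∈ range n, (-1) ^ i * cfGap a i := by
  induction n with
  | zero => simp [cfConv, cfNum]
  | succ n ih => rw [sum_range_succ, ← ih, ← cfConv_succ_sub ha]; ring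

lemma tendsto_cfConv : Tendsto (cfConv a) atTop (𝓝 (cfValue a)) := by
  simpa only [← cfConv_eq_sum ha, cfValue] using
    (summable_cfGap ha).tendsto_alternating_series_tsum

lemma abs_cfValue_sub_cfConv_le (n : ℕ) : |cfValue a - cfConv a n| ≤ cfGap a n := by
  rw [cfConv_eq_sum ha]
  exact alternating_series_error_bound _ (antitone_cfGap ha) (summable_cfGap ha) n

lemma isCFOf_cfValue : IsCFOf (cfValue a) a := by
  refine ⟨ha, (tendsto_add_atTop_iff_nat 1).mp ?_⟩
  simpa only [cont_tail_map_range_succ, cont_map_range, cfConv] using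
    (tendsto_add_atTop_iff_nat 1).mpr (tendsto_cfConv ha)

lemma cfValue_pos : 0 < cfValue a := by
  have hle := (antitone_cfGap ha).alternating_series_le_tendsto
    (summable_cfGap ha).tendsto_alternating_series_tsum 1
  rw [← cfConv_eq_sum ha] at hle
  have hnum : 0 < cfNum a 2 := by simpa [cfNum] using ha 1
  have := cfDen_pos ha 2
  exact lt_of_lt_of_le (by unfold cfConv; positivity) hle

lemma cfValue_lt_one : cfValue a < 1 := by
  have hle := (antitone_cfGap ha).tendsto_le_alternating_series
    (summable_cfGap ha).tendsto_alternating_series_tsum 1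
  rw [← cfConv_eq_sum ha] at hle
  have h1 := cfConv_succ_sub ha 1
  have h2 := cfConv_succ_sub ha 2
  have hhalf := cfGap_succ_le_half ha 1
  have hgap := cfGap_pos ha 1
  have hc1 : cfConv a 1 ≤ 1 := by
    have : (1 : ℝ) ≤ cfDen a 1 := by exact_mod_cast cfDen_pos ha 1
    simpa [cfConv, cfNum] using inv_le_one_of_one_le₀ this
  norm_num at hle h1 h2 hhalf
  linarith [show cfValue a ≤ cfConv a 3 from hle]

lemma irrational_cfValue : Irrational (cfValue a) := by
  rintro ⟨r, hr⟩
  -- `r ≠ pₙ/qₙ` would force `|r - pₙ/qₙ| ≥ 1/(r.den qₙ) > 1/(qₙ qₙ₊₁)` once `qₙ₊₁ > r.den`;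
  -- so the convergents are eventually constant, which their nonzero increments forbid.
  have hconv : ∀ n, r.den ≤ n → cfValue a = cfConv a n := by
    intro n hn
    have hq := cfDen_pos ha n
    have hlt : r.den < cfDen a (n + 1) := by have := le_cfDen ha (n + 1); omega
    have hgap : cfGap a n < ((r.den : ℝ) * cfDen a n)⁻¹ := by
      unfold cfGap
      rw [mul_comm (r.den : ℝ)]
      gcongr
    have h := (abs_cfValue_sub_cfConv_le ha n).trans_lt hgap
    rw [← hr, Rat.cast_def] at h ⊢
    exact div_eq_div_of_abs_sub_lt r.pos hq h
  have h := cfConv_succ_sub ha r.den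
  rw [← hconv _ le_rfl, ← hconv _ (Nat.le_succ _), sub_self, eq_comm] at h
  exact (cfGap_pos ha r.den).ne' (by simpa using h)

lemma cfValue_mem_Ioo : cfValue a ∈ Set.Ioo 0 1 := ⟨cfValue_pos ha, cfValue_lt_one ha⟩

lemma cfBump_pos (t i : ℕ) : 0 < cfBump a t i := by
  rw [cfBump_apply]; exact Nat.add_pos_left (ha i) _

lemma abs_cfValue_cfBump_sub_le (t : ℕ) :
    |cfValue (cfBump a t) - cfValue a| ≤ 2 * ((cfDen a t : ℝ) ^ 2)⁻¹ := by
  have hagree : ∀ i < t, cfBump a t i = a i := fun i hi => by simp [cfBump_apply, hi.ne]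
  have hden : cfDen (cfBump a t) t = cfDen a t := cfDen_congr hagree
  have hconv : cfConv (cfBump a t) t = cfConv a t := by
    rw [cfConv, cfConv, hden, cfNum_congr hagree]
  have hbump := (abs_cfValue_sub_cfConv_le (cfBump_pos ha t) t).trans
    (cfGap_le_inv_sq (cfBump_pos ha t) t)
  rw [hconv, hden] at hbump
  have h := (abs_cfValue_sub_cfConv_le ha t).trans (cfGap_le_inv_sq ha t)
  rw [abs_sub_comm] at h
  linarith [abs_sub_le (cfValue (cfBump a t)) (cfConv a t) (cfValue a)]

lemma tendsto_cfValue_cfBump :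
    Tendsto (fun t => cfValue (cfBump a t)) atTop (𝓝 (cfValue a)) := by
  have hden : Tendsto (fun t => (cfDen a t : ℝ)) atTop atTop :=
    tendsto_atTop_mono (fun t => by exact_mod_cast le_cfDen ha t) tendsto_natCast_atTop_atTop
  have hbound : Tendsto (fun t => 2 * ((cfDen a t : ℝ) ^ 2)⁻¹) atTop (𝓝 0) := by
    simpa using (((tendsto_pow_atTop two_ne_zero).comp hden).inv_tendsto_atTop).const_mul 2
  exact tendsto_iff_norm_sub_tendsto_zero.mpr
    (squeeze_zero_norm (fun t => by simpa using abs_cfValue_cfBump_sub_le ha t) hbound)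

lemma IsMinkowski.apply_cfValue {Q : ℝ → ℝ} (hQ : IsMinkowski Q) :
    Q (cfValue a) = ∑' k, (-1) ^ k * qmWeight a k := by
  rw [hQ.2.2.2.2 _ (cfValue_mem_Ioo ha) (irrational_cfValue ha) a (isCFOf_cfValue ha)]
  congr! 2 with k
  rw [qmWeight, zpow_sub₀ two_ne_zero, zpow_one, zpow_natCast]

lemma qmWeight_succ_le_half (k : ℕ) : qmWeight a (k + 1) ≤ qmWeight a k / 2 := by
  have hS : cfSum a (k + 1) + 1 ≤ cfSum a (k + 2) := by
    rw [cfSum_succ a (k + 1)]; exact Nat.add_le_add_left (ha (k + 1)) _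
  rw [qmWeight, qmWeight, div_div, ← pow_succ]
  gcongr
  norm_num

lemma antitone_qmWeight : Antitone (qmWeight a) :=
  antitone_nat_of_succ_le fun k =>
    (qmWeight_succ_le_half ha k).trans (half_le_self (qmWeight_pos a k).le)

lemma summable_qmWeight : Summable (qmWeight a) :=
  summable_of_ratio_norm_eventually_le (by norm_num : (2⁻¹ : ℝ) < 1) <|
    Eventually.of_forall fun k => by
      simpa [abs_of_pos (qmWeight_pos a _), div_eq_inv_mul] using qmWeight_succ_le_half ha k

lemma tsum_sub_tsum_cfBump (t : ℕ) :
    ∑' k, (-1) ^ k * qmWeight a k - ∑' k, (-1) ^ k * qmWeight (cfBump a t) k =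
      (-1) ^ t * (∑' j, (-1) ^ j * qmWeight a (j + t)) / 2 := by
  have hhead : ∀ i ∈ range t, (-1 : ℝ) ^ i * qmWeight (cfBump a t) i = (-1) ^ i * qmWeight a i :=
    fun i hi => by rw [qmWeight_cfBump, if_neg (by simpa using hi)]
  have htail : ∀ j, (-1 : ℝ) ^ (j + t) * qmWeight (cfBump a t) (j + t) =
      (-1) ^ (j + t) * qmWeight a (j + t) / 2 := fun j => by
    rw [qmWeight_cfBump, if_pos (Nat.le_add_left t j)]; ring
  have hshift : ∑' j, (-1 : ℝ) ^ (j + t) * qmWeight a (j + t) =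
      (-1) ^ t * ∑' j, (-1) ^ j * qmWeight a (j + t) := by
    rw [← tsum_mul_left]
    exact tsum_congr fun j => by ring
  rw [← (summable_qmWeight ha).alternating.sum_add_tsum_nat_add t,
    ← (summable_qmWeight (cfBump_pos ha t)).alternating.sum_add_tsum_nat_add t,
    sum_congr rfl hhead, tsum_congr htail, tsum_div_const, hshift]
  ring

lemma qmWeight_div_four_le_abs_sub {Q : ℝ → ℝ} (hQ : IsMinkowski Q) (t : ℕ) :
    qmWeight a t / 4 ≤ |Q (cfValue (cfBump a t)) - Q (cfValue a)| := by
  rw [hQ.apply_cfValue ha, hQ.apply_cfValue (cfBump_pos ha t), abs_sub_comm,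
    tsum_sub_tsum_cfBump ha, abs_div, abs_mul, abs_neg_one_pow, one_mul, abs_two]
  have hanti : Antitone (fun j => qmWeight a (j + t)) :=
    (antitone_qmWeight ha).comp_monotone fun i j h => by omega
  have hsum : Summable (fun j => qmWeight a (j + t)) :=
    (summable_nat_add_iff t).2 (summable_qmWeight ha)
  have h1 : qmWeight a (1 + t) ≤ qmWeight a (0 + t) / 2 := by
    rw [add_comm 1, zero_add]; exact qmWeight_succ_le_half ha t
  have h := (half_le_tsum_alternating hanti hsum h1).trans (le_abs_self _)
  rw [zero_add] at h
  linarith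

lemma eventually_goldenRatio_pow_le {Q : ℝ → ℝ} (hQ : IsMinkowski Q)
    (hder : HasDerivAt Q 0 (cfValue a)) :
    ∀ᶠ t in atTop, goldenRatio ^ (2 * (t + 1)) ≤ 2 ^ cfSum a (t + 1) := by
  have hlo : (fun y => Q y - Q (cfValue a)) =o[𝓝 (cfValue a)] (fun y => y - cfValue a) := by
    simpa using hasDerivAt_iff_isLittleO.mp hder
  have hε : (0 : ℝ) < (4 * goldenRatio ^ 4)⁻¹ := by positivity
  filter_upwards [(hlo.comp_tendsto (tendsto_cfValue_cfBump ha)).def hε] with t ht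
  simp only [Function.comp, norm_eq_abs] at ht
  have hw := ((qmWeight_div_four_le_abs_sub ha hQ t).trans ht).trans
    (mul_le_mul_of_nonneg_left (abs_cfValue_cfBump_sub_le ha t) hε.le)
  have hq : (0 : ℝ) < cfDen a t := by exact_mod_cast cfDen_pos ha t
  have hden : goldenRatio ^ 4 * (cfDen a t : ℝ) ^ 2 ≤ 2 ^ cfSum a (t + 1) := by
    have hF : 0 < goldenRatio ^ 4 := by positivity
    generalize goldenRatio ^ 4 = F at hw hF ⊢
    rw [qmWeight] at hw
    field_simp at hw
    linarith
  calc goldenRatio ^ (2 * (t + 1)) = (goldenRatio * goldenRatio ^ t) ^ 2 := by ring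
    _ ≤ (goldenRatio * (goldenRatio * cfDen a t)) ^ 2 := by
      gcongr; exact goldenRatio_pow_le_mul_cfDen ha t
    _ = goldenRatio ^ 4 * (cfDen a t : ℝ) ^ 2 := by ring
    _ ≤ 2 ^ cfSum a (t + 1) := hden

lemma eventually_kappa1_mul_le_cfSum {Q : ℝ → ℝ} (hQ : IsMinkowski Q)
    (hder : HasDerivAt Q 0 (cfValue a)) : ∀ᶠ u in atTop, kappa1 * u ≤ cfSum a u := by
  filter_upwards [eventually_ge_atTop 1,
    (tendsto_sub_atTop_nat 1).eventually (eventually_goldenRatio_pow_le ha hQ hder)] with u hu h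
  rw [Nat.sub_add_cancel hu] at h
  exact kappa1_mul_le_of_goldenRatio_pow_le h

end PositivePartialQuotients

lemma IsCFOf.eq_cfValue {a : ℕ → ℕ} {x : ℝ} (hx : IsCFOf x a) : x = cfValue a :=
  tendsto_nhds_unique hx.2 (isCFOf_cfValue hx.1).2

theorem stmt12_general (x : ℝ)
    (a : ℕ → ℕ) (ha : IsCFOf x a)
    (Q : ℝ → ℝ) (hQ : IsMinkowski Q) (hder : HasDerivAt Q 0 x) :
    ∃ T : ℕ, ∀ t s : ℕ, T < s → s < t →
      ∃ u : ℕ, 1 ≤ u ∧ u ≤ t ∧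
        (cfSum a u : ℝ) - kappa1 * u ≥
          |((cfSum a t : ℝ) - kappa1 * t) - ((cfSum a s : ℝ) - kappa1 * s)| := by
  rw [ha.eq_cfValue] at hder
  refine exists_abs_sub_le_of_eventually_nonneg (φ := fun u => (cfSum a u : ℝ) - kappa1 * u) ?_
  filter_upwards [eventually_kappa1_mul_le_cfSum ha.1 hQ hder] with u hu
  exact sub_nonneg.2 hu

/-- If `?'(x) = 0`, writing `φ_x(t) = S_x(t) - κ₁ t`, there is `T` such that for all
`t > s > T` one has `max_{1 ≤ u ≤ t} φ_x(u) ≥ |φ_x(t) - φ_x(s)|`. -/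
theorem stmt12 (x : ℝ) (hx : x ∈ Set.Ioo (0:ℝ) 1) (hirr : Irrational x)
    (a : ℕ → ℕ) (ha : IsCFOf x a)
    (Q : ℝ → ℝ) (hQ : IsMinkowski Q) (hder : HasDerivAt Q 0 x) :
    ∃ T : ℕ, ∀ t s : ℕ, T < s → s < t →
      ∃ u : ℕ, 1 ≤ u ∧ u ≤ t ∧
        (cfSum a u : ℝ) - kappa1 * u ≥
          |((cfSum a t : ℝ) - kappa1 * t) - ((cfSum a s : ℝ) - kappa1 * s)| :=
  stmt12_general x a ha Q hQ hder
end

section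
/- Let B = (b_1,…,b_n) be a finite sequence of positive integers each of which equals 1 or is at least 12, and suppose at least one element is greater than 1. Let M = max_i b_i and let Σ be the sum of the elements of B that are greater than 1. Then ⟨B⟩ ≥ (1/2)·Φ^n·(M/4)^{⌊Σ/M⌋}. -/
/-!
Read `B` backwards and track the pair `p = ⟨a_1,…,a_t⟩`, `q = ⟨a_1,…,a_{t-1}⟩` through the
potential `p + q/Φ`. Appending a `1` multiplies the potential by exactly `Φ`, because
`Φ² = Φ + 1`. Appending `a ≥ 12` multiplies `p` by about `a`, and `a ≥ Φ² (M/4)^{a/M}` by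
Bernoulli's inequality, so every element `a > 1` contributes a factor `Φ (M/4)^{a/M}`. This gives
`Φ^n (M/4)^{Σ/M} ≤ p + q/Φ ≤ Φ p ≤ 2p`, and `⌊Σ/M⌋ ≤ Σ/M` finishes, since `M/4 ≥ 1`.
-/

lemma Phi_pos : 0 < Phi := by
  unfold Phi; positivity

lemma Phi_sq : Phi ^ 2 = Phi + 1 := by
  have := Real.sq_sqrt (show (0 : ℝ) ≤ 5 by norm_num)
  unfold Phi; linear_combination this / 4

lemma Phi_le_two : Phi ≤ 2 := by
  nlinarith [Phi_sq, Phi_pos]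

lemma Phi_mul_eq_add_div (x : ℝ) : Phi * x = x + x / Phi := by
  field_simp [Phi_pos.ne']
  linear_combination x * Phi_sq

lemma Phi_sq_mul_rpow_le {b M : ℝ} (hb : 12 ≤ b) (hbM : b ≤ M) :
    Phi ^ 2 * (M / 4) ^ (b / M) ≤ b := by
  have hM : 0 < M := by linarith
  have bernoulli : (M / 4) ^ (b / M) ≤ 1 + b / 4 := by
    have h := rpow_one_add_le_one_add_mul_self (s := M / 4 - 1) (by linarith)
      (div_nonneg (by linarith) hM.le) ((div_le_one hM).2 hbM)
    have hb' : b / M * (M / 4 - 1) = b / 4 - b / M := by field_simp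
    rw [add_sub_cancel, hb'] at h
    linarith [div_nonneg (by linarith : (0 : ℝ) ≤ b) hM.le]
  have hPhi : Phi ^ 2 ≤ 3 := by linarith [Phi_sq, Phi_le_two]
  calc Phi ^ 2 * (M / 4) ^ (b / M) ≤ 3 * (1 + b / 4) := by gcongr
    _ ≤ b := by linarith

/-- `contPrev [] = 0` rather than `contAux [] = 1`, so that `contAux_cons` holds for `l = []`. -/
def contPrev : List ℕ → ℕ
  | [] => 0
  | _ :: l => contAux l

lemma contAux_cons (a : ℕ) (l : List ℕ) : contAux (a :: l) = a * contAux l + contPrev l := by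
  cases l <;> simp [contAux, contPrev]

lemma contPrev_le_contAux {l : List ℕ} (hl : ∀ b ∈ l, 0 < b) : contPrev l ≤ contAux l := by
  cases l with
  | nil => simp [contPrev, contAux]
  | cons a l =>
    rw [contAux_cons, contPrev]
    nlinarith [hl a List.mem_cons_self]

lemma contAux_add_contPrev_div_le {l : List ℕ} (hl : ∀ b ∈ l, 0 < b) :
    (contAux l : ℝ) + contPrev l / Phi ≤ Phi * contAux l := by
  rw [Phi_mul_eq_add_div]
  gcongr
  · exact Phi_pos.le
  · exact_mod_cast contPrev_le_contAux hl

theorem Phi_pow_mul_rpow_le_contAux_add_contPrev_div {M : ℕ} (C : List ℕ)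
    (hC : ∀ b ∈ C, b = 1 ∨ 12 ≤ b ∧ b ≤ M) :
    Phi ^ C.length * ((M : ℝ) / 4) ^ (((C.filter (fun b => 1 < b)).sum : ℝ) / M) ≤
      contAux C + contPrev C / Phi := by
  induction C with
  | nil => simp [contAux, contPrev]
  | cons a l ih =>
    have hl : ∀ b ∈ l, b = 1 ∨ 12 ≤ b ∧ b ≤ M := fun b hb => hC b (List.mem_cons_of_mem a hb)
    have ih := ih hl
    set X : ℝ := ((M : ℝ) / 4) ^ (((l.filter (fun b => 1 < b)).sum : ℝ) / M)
    rw [contAux_cons, contPrev, List.length_cons, pow_succ, Nat.cast_add, Nat.cast_mul]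
    rcases hC a List.mem_cons_self with rfl | ⟨ha, haM⟩
    · rw [List.filter_cons_of_neg (by decide), Nat.cast_one, one_mul]
      calc Phi ^ l.length * Phi * X = Phi * (Phi ^ l.length * X) := by ring
        _ ≤ Phi * (contAux l + contPrev l / Phi) := by gcongr; exact Phi_pos.le
        _ = contAux l + contPrev l + contAux l / Phi := by
          rw [mul_add, Phi_mul_eq_add_div, mul_div_cancel₀ _ Phi_pos.ne']; ring
    · have haR : (12 : ℝ) ≤ a := by exact_mod_cast ha
      have haMR : (a : ℝ) ≤ M := by exact_mod_cast haM
      have hM : (0 : ℝ) < M / 4 := by linarith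
      have hpos : ∀ b ∈ l, 0 < b := fun b hb => by rcases hl b hb with h | h <;> omega
      rw [List.filter_cons_of_pos (by simpa using (by omega : 1 < a)), List.sum_cons,
        Nat.cast_add, add_div, Real.rpow_add hM]
      calc Phi ^ l.length * Phi * (((M : ℝ) / 4) ^ ((a : ℝ) / M) * X)
          = Phi * ((M : ℝ) / 4) ^ ((a : ℝ) / M) * (Phi ^ l.length * X) := by ring
        _ ≤ Phi * ((M : ℝ) / 4) ^ ((a : ℝ) / M) * (Phi * contAux l) :=
          mul_le_mul_of_nonneg_left (ih.trans (contAux_add_contPrev_div_le hpos))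
            (mul_nonneg Phi_pos.le (Real.rpow_nonneg hM.le _))
        _ = Phi ^ 2 * ((M : ℝ) / 4) ^ ((a : ℝ) / M) * contAux l := by ring
        _ ≤ a * contAux l := by gcongr; exact Phi_sq_mul_rpow_le haR haMR
        _ ≤ a * contAux l + contPrev l + contAux l / Phi := by
          have : (0 : ℝ) ≤ contAux l / Phi := div_nonneg (Nat.cast_nonneg _) Phi_pos.le
          have : (0 : ℝ) ≤ contPrev l := Nat.cast_nonneg _
          linarith

theorem stmt13_general (B : List ℕ) (hsize : ∀ b ∈ B, b = 1 ∨ 12 ≤ b) (hex : ∃ b ∈ B, 1 < b)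
    (M : ℕ) (hMmax : ∀ b ∈ B, b ≤ M) :
    (cont B : ℝ) ≥
      1 / 2 * Phi ^ B.length *
        ((M : ℝ) / 4) ^ ((B.filter (fun b => 1 < b)).sum / M) := by
  obtain ⟨b, hbB, hb⟩ := hex
  have hM : (12 : ℝ) ≤ M := by
    have hb12 : 12 ≤ b := (hsize b hbB).resolve_left hb.ne'
    exact_mod_cast hb12.trans (hMmax b hbB)
  have hrev : ∀ b ∈ B.reverse, b = 1 ∨ 12 ≤ b ∧ b ≤ M := fun b hb => by
    rw [List.mem_reverse] at hb
    exact (hsize b hb).imp_right fun h => ⟨h, hMmax b hb⟩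
  have hpos : ∀ b ∈ B.reverse, 0 < b := fun b hb => by rcases hrev b hb with h | h <;> omega
  have key := Phi_pow_mul_rpow_le_contAux_add_contPrev_div B.reverse hrev
  rw [List.length_reverse, List.filter_reverse, List.sum_reverse] at key
  have hfloor : ((M : ℝ) / 4) ^ ((B.filter (fun b => 1 < b)).sum / M) ≤
      ((M : ℝ) / 4) ^ (((B.filter (fun b => 1 < b)).sum : ℝ) / M) := by
    rw [← Real.rpow_natCast]
    exact Real.rpow_le_rpow_of_exponent_le (by linarith) Nat.cast_div_le
  calc 1 / 2 * Phi ^ B.length * ((M : ℝ) / 4) ^ ((B.filter (fun b => 1 < b)).sum / M)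
      ≤ 1 / 2 * (Phi * cont B) := by
        rw [mul_assoc]
        refine mul_le_mul_of_nonneg_left ?_ (by norm_num)
        exact (mul_le_mul_of_nonneg_left hfloor (pow_nonneg Phi_pos.le _)).trans
          (key.trans (contAux_add_contPrev_div_le hpos))
    _ ≤ cont B := by nlinarith [Phi_le_two, (Nat.cast_nonneg (cont B) : (0 : ℝ) ≤ cont B)]

/-- If every element of `B` equals `1` or is at least `12`, some element exceeds `1`,
`M` is the largest element and `Σ` is the sum of the elements greater than `1`, then
`⟨B⟩ ≥ (1/2) Φ^n (M/4)^⌊Σ/M⌋`. -/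
theorem stmt13 (B : List ℕ) (hsize : ∀ b ∈ B, b = 1 ∨ 12 ≤ b) (hex : ∃ b ∈ B, 1 < b)
    (M : ℕ) (hMmem : M ∈ B) (hMmax : ∀ b ∈ B, b ≤ M) :
    (cont B : ℝ) ≥
      1 / 2 * Phi ^ B.length *
        ((M : ℝ) / 4) ^ ((B.filter (fun b => 1 < b)).sum / M) :=
  stmt13_general B hsize hex M hMmax
end
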